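/- arXiv:2505.10480 — 3 statements merged into one kernel-verified Lean document; each statement's English description precedes it below -/
import Mathlib

section
/- Let A ∈ ASM(n) and let v ∈ S_{n+1} be a permutation with v ≥ 1 ⊕ A in Bruhat order (extended via rank functions to ASMs) such that v is less than or equal to 1 ⊕ w for some w ∈ S_n. If the first row and first column of v agree with those of 1 ⊕ A (both equal to the first unit vector), then v = 1 ⊕ v' for some v' ∈ S_n with w ≥ v' ≥ A. -/
/-! The hypotheses on the first row and column say exactly that `v = 1 ⊕ v'`, where `v'` is the
lower-right block of `v`. Since `rk_{1 ⊕ M}(i+1, j+1) = 1 + rk_M(i, j)`, both Bruhat inequalities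
and the permutation-matrix property pass from `1 ⊕ ·` to the blocks. -/

/-- An alternating sign matrix: entries in `{-1,0,1}`, each row and column sums
to `1`, and consecutive nonzero entries along any row or column have opposite
signs (i.e. nonzero entries alternate between `1` and `-1`). -/
def IsASM {n : ℕ} (A : Matrix (Fin n) (Fin n) ℤ) : Prop :=
  (∀ i j, A i j = -1 ∨ A i j = 0 ∨ A i j = 1) ∧
  (∀ i, ∑ j, A i j = 1) ∧
  (∀ j, ∑ i, A i j = 1) ∧
  (∀ i : Fin n, ∀ j₁ j₂ : Fin n, j₁ < j₂ → A i j₁ ≠ 0 → A i j₂ ≠ 0 →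
    (∀ j, j₁ < j → j < j₂ → A i j = 0) → A i j₂ = -A i j₁) ∧
  (∀ j : Fin n, ∀ i₁ i₂ : Fin n, i₁ < i₂ → A i₁ j ≠ 0 → A i₂ j ≠ 0 →
    (∀ i, i₁ < i → i < i₂ → A i j = 0) → A i₂ j = -A i₁ j)

/-- The rank function `rk_A(i,j) = ∑_{a ≤ i} ∑_{b ≤ j} A_{a,b}` (1-based indices,
so `rk A i j` sums the entries in the first `i` rows and first `j` columns). -/
def rk {n : ℕ} (A : Matrix (Fin n) (Fin n) ℤ) (i j : ℕ) : ℤ :=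
  ∑ a : Fin n, ∑ b : Fin n, if (a : ℕ) < i ∧ (b : ℕ) < j then A a b else 0

/-- The matrix `1 ⊕ A`. -/
def oneOplus {n : ℕ} (A : Matrix (Fin n) (Fin n) ℤ) :
    Matrix (Fin (n + 1)) (Fin (n + 1)) ℤ :=
  Matrix.of fun i j =>
    if hi : (i : ℕ) = 0 then (if (j : ℕ) = 0 then 1 else 0)
    else if hj : (j : ℕ) = 0 then 0
    else A ⟨(i : ℕ) - 1, by have := i.isLt; omega⟩ ⟨(j : ℕ) - 1, by have := j.isLt; omega⟩

/-- The Bruhat order on ASMs: `B ≥ C` iff `rk_B(i,j) ≤ rk_C(i,j)` for all `i,j`. -/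
def BruhatGE {n : ℕ} (B C : Matrix (Fin n) (Fin n) ℤ) : Prop :=
  ∀ i j : ℕ, i ≤ n → j ≤ n → rk B i j ≤ rk C i j

/-- A permutation matrix: a `0`-`1` matrix with exactly one `1` in each row and column. -/
def IsPermMatrix {n : ℕ} (w : Matrix (Fin n) (Fin n) ℤ) : Prop :=
  (∀ i j, w i j = 0 ∨ w i j = 1) ∧ (∀ i, ∃! j, w i j = 1) ∧ (∀ j, ∃! i, w i j = 1)

section oneOplus

variable {n : ℕ} (M : Matrix (Fin n) (Fin n) ℤ)

@[simp] lemma oneOplus_zero_zero : oneOplus M 0 0 = 1 := by simp [oneOplus]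

@[simp] lemma oneOplus_zero_succ (j : Fin n) : oneOplus M 0 j.succ = 0 := by simp [oneOplus]

@[simp] lemma oneOplus_succ_zero (i : Fin n) : oneOplus M i.succ 0 = 0 := by simp [oneOplus]

@[simp] lemma oneOplus_succ_succ (i j : Fin n) : oneOplus M i.succ j.succ = M i j := by
  simp [oneOplus]

lemma rk_oneOplus_succ_succ (i j : ℕ) : rk (oneOplus M) (i + 1) (j + 1) = 1 + rk M i j := by
  simp [rk, Fin.sum_univ_succ]

end oneOplus

lemma BruhatGE.of_oneOplus {n : ℕ} {B C : Matrix (Fin n) (Fin n) ℤ}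
    (h : BruhatGE (oneOplus B) (oneOplus C)) : BruhatGE B C := fun i j hi hj => by
  simpa [rk_oneOplus_succ_succ] using h (i + 1) (j + 1) (by omega) (by omega)

lemma IsPermMatrix.of_oneOplus {n : ℕ} {M : Matrix (Fin n) (Fin n) ℤ}
    (h : IsPermMatrix (oneOplus M)) : IsPermMatrix M := by
  obtain ⟨h01, hrow, hcol⟩ := h
  refine ⟨fun i j => by simpa using h01 i.succ j.succ, fun i => ?_, fun j => ?_⟩
  · obtain ⟨j, hj, huniq⟩ := hrow i.succ
    obtain ⟨j, rfl⟩ : ∃ j', j = Fin.succ j' :=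
      Fin.eq_succ_of_ne_zero (by rintro rfl; simp at hj)
    exact ⟨j, by simpa using hj, fun k hk => Fin.succ_injective _ (huniq k.succ (by simpa))⟩
  · obtain ⟨i, hi, huniq⟩ := hcol j.succ
    obtain ⟨i, rfl⟩ : ∃ i', i = Fin.succ i' :=
      Fin.eq_succ_of_ne_zero (by rintro rfl; simp at hi)
    exact ⟨i, by simpa using hi, fun k hk => Fin.succ_injective _ (huniq k.succ (by simpa))⟩

lemma eq_oneOplus_submatrix_succ {n : ℕ} (v : Matrix (Fin (n + 1)) (Fin (n + 1)) ℤ)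
    (h00 : v 0 0 = 1) (hrow : ∀ j : Fin (n + 1), j ≠ 0 → v 0 j = 0)
    (hcol : ∀ i : Fin (n + 1), i ≠ 0 → v i 0 = 0) :
    v = oneOplus (v.submatrix Fin.succ Fin.succ) := by
  ext i j
  cases i using Fin.cases <;> cases j using Fin.cases <;>
    simp [h00, hrow, hcol, Fin.succ_ne_zero]

theorem perm_above_oneOplus_splits_general {n : ℕ} (A w : Matrix (Fin n) (Fin n) ℤ)
    (v : Matrix (Fin (n + 1)) (Fin (n + 1)) ℤ)
    (hv : IsPermMatrix v)
    (hvA : BruhatGE v (oneOplus A)) (hwv : BruhatGE (oneOplus w) v)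
    (hrow : v 0 0 = 1 ∧ (∀ j : Fin (n + 1), j ≠ 0 → v 0 j = 0) ∧
      (∀ i : Fin (n + 1), i ≠ 0 → v i 0 = 0)) :
    ∃ v' : Matrix (Fin n) (Fin n) ℤ, IsPermMatrix v' ∧ v = oneOplus v' ∧
      BruhatGE w v' ∧ BruhatGE v' A := by
  obtain ⟨h00, hrow0, hcol0⟩ := hrow
  have hsplit := eq_oneOplus_submatrix_succ v h00 hrow0 hcol0
  rw [hsplit] at hv hvA hwv
  exact ⟨_, hv.of_oneOplus, hsplit, hwv.of_oneOplus, hvA.of_oneOplus⟩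

/-- If `v ∈ S_{n+1}` satisfies `1 ⊕ w ≥ v ≥ 1 ⊕ A` and the first row and first
column of `v` agree with those of `1 ⊕ A` (both equal to the first unit vector),
then `v = 1 ⊕ v'` for some `v' ∈ S_n` with `w ≥ v' ≥ A`. -/
theorem perm_above_oneOplus_splits {n : ℕ} (A w : Matrix (Fin n) (Fin n) ℤ)
    (v : Matrix (Fin (n + 1)) (Fin (n + 1)) ℤ)
    (hA : IsASM A) (hw : IsPermMatrix w) (hv : IsPermMatrix v)
    (hvA : BruhatGE v (oneOplus A)) (hwv : BruhatGE (oneOplus w) v)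
    (hrow : v 0 0 = 1 ∧ (∀ j : Fin (n + 1), j ≠ 0 → v 0 j = 0) ∧
      (∀ i : Fin (n + 1), i ≠ 0 → v i 0 = 0)) :
    ∃ v' : Matrix (Fin n) (Fin n) ℤ, IsPermMatrix v' ∧ v = oneOplus v' ∧
      BruhatGE w v' ∧ BruhatGE v' A :=
  perm_above_oneOplus_splits_general A w v hv hvA hwv hrow
end

section
/- Suppose an n×n ASM A contains an (n−k)×(n−k) ASM A' as a submatrix, with W = {r_1,…,r_k} the rows of A not meeting A' and C = {c_1,…,c_k} the columns of A not meeting A'. Then for each i ∈ [k], A_{r_i,c} = 0 whenever c < c_1 or c > c_k, and A_{r,c_i} = 0 whenever r < r_1 or r > r_k. -/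
open Finset

def SignsAlternate {ι : Type*} [LinearOrder ι] (f : ι → ℤ) : Prop :=
  ∀ j₁ j₂ : ι, j₁ < j₂ → f j₁ ≠ 0 → f j₂ ≠ 0 → (∀ j, j₁ < j → j < j₂ → f j = 0) → f j₂ = -f j₁

namespace SignsAlternate

variable {ι : Type*} [LinearOrder ι] {f : ι → ℤ}

theorem sum_eq_zero_or_eq_last (hf : SignsAlternate f) (s : Finset ι)
    (hs : (s : Set ι).OrdConnected) :
    ∑ i ∈ s, f i = 0 ∨ ∃ b ∈ s, (∀ i ∈ s, b < i → f i = 0) ∧ ∑ i ∈ s, f i = f b := by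
  classical
  induction s using Finset.induction_on_max with
  | empty => simp
  | insert a s ha ih =>
    have ha' : a ∉ s := fun h => lt_irrefl a (ha a h)
    have hs' : (s : Set ι).OrdConnected := Set.ordConnected_def.2 fun x hx y hy z hz =>
      (mem_insert.1 (hs.out (by simp [mem_coe.1 hx]) (by simp [mem_coe.1 hy]) hz)).resolve_left
        (ne_of_lt (lt_of_le_of_lt hz.2 (ha y hy)))
    rw [sum_insert ha']
    by_cases hfa : f a = 0
    · rcases ih hs' with h | ⟨b, hb, hlast, hsum⟩
      · exact Or.inl (by rw [hfa, h]; rfl)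
      · refine Or.inr ⟨b, mem_insert_of_mem hb, fun i hi hbi => ?_, by rw [hfa, hsum]; ring⟩
        rcases mem_insert.1 hi with rfl | hi
        · exact hfa
        · exact hlast i hi hbi
    have last_a : ∀ i ∈ insert a s, a < i → f i = 0 := fun i hi hai =>
      absurd hai (not_lt.2 ((mem_insert.1 hi).elim le_of_eq fun h => (ha i h).le))
    rcases ih hs' with h | ⟨b, hb, hlast, hsum⟩
    · exact Or.inr ⟨a, mem_insert_self a s, last_a, by rw [h]; ring⟩
    by_cases hfb : f b = 0
    · exact Or.inr ⟨a, mem_insert_self a s, last_a, by rw [hsum, hfb]; ring⟩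
    have hgap : ∀ j, b < j → j < a → f j = 0 := fun j hbj hja =>
      hlast j ((mem_insert.1 (hs.out (by simp [hb]) (by simp) ⟨hbj.le, hja.le⟩)).resolve_left
        hja.ne) hbj
    left
    rw [hf b a (ha b hb) hfb hfa hgap, hsum]
    ring

theorem abs_sum_le_one (hf : SignsAlternate f) (hf1 : ∀ i, f i = -1 ∨ f i = 0 ∨ f i = 1)
    {s : Finset ι} (hs : (s : Set ι).OrdConnected) : |∑ i ∈ s, f i| ≤ 1 := by
  rcases hf.sum_eq_zero_or_eq_last s hs with h | ⟨b, -, -, h⟩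
  · simp [h]
  · rw [h, abs_le]; rcases hf1 b with h | h | h <;> omega

end SignsAlternate

theorem IsASM.transpose {n : ℕ} {A : Matrix (Fin n) (Fin n) ℤ} (hA : IsASM A) :
    IsASM A.transpose :=
  ⟨fun i j => hA.1 j i, hA.2.2.1, hA.2.1, hA.2.2.2.2, hA.2.2.2.1⟩

theorem IsASM.zero_le_sum_row {n : ℕ} {A : Matrix (Fin n) (Fin n) ℤ} (hA : IsASM A) (r : Fin n)
    {s : Finset (Fin n)} (hs : ((sᶜ : Finset (Fin n)) : Set (Fin n)).OrdConnected) :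
    0 ≤ ∑ c ∈ s, A r c := by
  have hcompl := abs_le.1 (SignsAlternate.abs_sum_le_one (f := A r) (hA.2.2.2.1 r) (hA.1 r) hs)
  have htotal : ∑ c ∈ s, A r c + ∑ c ∈ sᶜ, A r c = 1 := by
    rw [sum_add_sum_compl]; exact hA.2.1 r
  linarith [hcompl.2]

theorem sum_row_eq_zero_of_notMem_range {ι κ α β : Type*} [Fintype ι] [Fintype α]
    [DecidableEq ι] (A : Matrix ι κ ℤ) {fR : α → ι} {fC : β → κ} (hfR : Function.Injective fR)
    (hcol : ∀ c, ∑ r, A r c = 1) (hcol' : ∀ j, ∑ i, A (fR i) (fC j) = 1) {S : Finset κ}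
    (hS : (S : Set κ) ⊆ Set.range fC) (hnonneg : ∀ r ∉ Set.range fR, 0 ≤ ∑ c ∈ S, A r c)
    {r : ι} (hr : r ∉ Set.range fR) : ∑ c ∈ S, A r c = 0 := by
  set K := univ.image fR
  have hall : ∑ r, ∑ c ∈ S, A r c = #S := by
    rw [sum_comm (f := fun r c => A r c)]; simp [hcol]
  have hkept : ∑ r ∈ K, ∑ c ∈ S, A r c = #S := by
    rw [sum_image fun x _ y _ h => hfR h, sum_comm (f := fun i c => A (fR i) c)]
    have : ∀ c ∈ S, ∑ i, A (fR i) c = 1 := fun c hc => by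
      obtain ⟨j, rfl⟩ := hS hc; exact hcol' j
    simp [sum_congr rfl this]
  have hmemK : ∀ r, r ∈ Kᶜ ↔ r ∉ Set.range fR := by simp [K]
  have hdeleted : ∑ r ∈ Kᶜ, ∑ c ∈ S, A r c = 0 := by
    linarith [sum_add_sum_compl K fun r => ∑ c ∈ S, A r c]
  exact (sum_eq_zero_iff_of_nonneg fun r hr => hnonneg r ((hmemK r).1 hr)).1
    hdeleted r ((hmemK r).2 hr)

theorem IsASM.eq_zero_of_notMem_range {n : ℕ} {α β : Type*} [Fintype α]
    {A : Matrix (Fin n) (Fin n) ℤ} (hA : IsASM A) {fR : α → Fin n} {fC : β → Fin n}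
    (hfR : Function.Injective fR) (hcol' : ∀ j, ∑ i, A (fR i) (fC j) = 1) {r c : Fin n}
    (hr : r ∉ Set.range fR)
    (hc : (∀ c', c' ∉ Set.range fC → c < c') ∨ (∀ c', c' ∉ Set.range fC → c' < c)) :
    A r c = 0 := by
  have vanish : ∀ T : Finset (Fin n), (T : Set (Fin n)) ⊆ Set.range fC →
      ((Tᶜ : Finset (Fin n)) : Set (Fin n)).OrdConnected → ∑ c ∈ T, A r c = 0 :=
    fun T hT hTc => sum_row_eq_zero_of_notMem_range A hfR hA.2.2.1 hcol' hT
      (fun r _ => hA.zero_le_sum_row r hTc) hr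
  have split : ∀ S T : Finset (Fin n), c ∉ S → insert c S = T →
      (T : Set (Fin n)) ⊆ Set.range fC → ((Sᶜ : Finset (Fin n)) : Set (Fin n)).OrdConnected →
      ((Tᶜ : Finset (Fin n)) : Set (Fin n)).OrdConnected → A r c = 0 := by
    rintro S T hcS rfl hT hS hT'
    have hsum := vanish _ hT hT'
    rwa [sum_insert hcS, vanish S ((coe_subset.2 (subset_insert c S)).trans hT) hS,
      add_zero] at hsum
  rcases hc with hc | hc
  · refine split (Iio c) (Iic c) (by simp) (Iio_insert c) (fun b hb => ?_)
      (by simpa using Set.ordConnected_Ici) (by simpa using Set.ordConnected_Ioi)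
    by_contra hb'
    exact absurd (hc b hb') (not_lt.2 (mem_Iic.1 hb))
  · refine split (Ioi c) (Ici c) (by simp) (Ioi_insert c) (fun b hb => ?_)
      (by simpa using Set.ordConnected_Iic) (by simpa using Set.ordConnected_Iio)
    by_contra hb'
    exact absurd (hc b hb') (not_lt.2 (mem_Ici.1 hb))

/-- Suppose an `(m+k) × (m+k)` ASM `A` contains an `m × m` ASM as a submatrix,
where `fR, fC` are the strictly increasing maps selecting the kept rows and
columns.  Then every deleted row vanishes in the columns strictly west of the
first deleted column and strictly east of the last deleted column, and
symmetrically for the deleted columns. -/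
theorem asm_submatrix_zero_entries {m k : ℕ}
    (A : Matrix (Fin (m + k)) (Fin (m + k)) ℤ)
    (fR fC : Fin m → Fin (m + k)) (hfR : StrictMono fR) (hfC : StrictMono fC)
    (hA : IsASM A)
    (hA' : IsASM (Matrix.of fun i j : Fin m => A (fR i) (fC j))) :
    (∀ r : Fin (m + k), r ∉ Set.range fR → ∀ c : Fin (m + k),
      ((∀ c', c' ∉ Set.range fC → c < c') ∨ (∀ c', c' ∉ Set.range fC → c' < c)) →
        A r c = 0) ∧
    (∀ c : Fin (m + k), c ∉ Set.range fC → ∀ r : Fin (m + k),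
      ((∀ r', r' ∉ Set.range fR → r < r') ∨ (∀ r', r' ∉ Set.range fR → r' < r)) →
        A r c = 0) :=
  ⟨fun _ hr _ hc => hA.eq_zero_of_notMem_range hfR.injective hA'.2.2.1 hr hc,
    fun _ hc _ hr => hA.transpose.eq_zero_of_notMem_range hfC.injective hA'.2.1 hc hr⟩
end

section
/- Suppose an n×n ASM A contains an (n−k)×(n−k) ASM A' as a submatrix, obtained by deleting rows W and columns C with |W| = |C| = k. Then ∑_{r∈W, c∈C} A_{r,c} = k. In particular there are at least k pairs (r,c) ∈ W × C with A_{r,c} = 1. -/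
open Finset Function

theorem Finset.sum_compl_sum_compl {α β G : Type*} [Fintype α] [Fintype β] [DecidableEq α]
    [DecidableEq β] [AddCommGroup G] (f : α → β → G) (s : Finset α) (t : Finset β) :
    ∑ a ∈ sᶜ, ∑ b ∈ tᶜ, f a b =
      ∑ a, ∑ b, f a b - ∑ a ∈ s, ∑ b, f a b - ∑ a, ∑ b ∈ t, f a b
        + ∑ a ∈ s, ∑ b ∈ t, f a b := by
  have hcompl : ∀ (a : α), ∑ b ∈ tᶜ, f a b = ∑ b, f a b - ∑ b ∈ t, f a b := fun a =>
    eq_sub_of_add_eq (sum_compl_add_sum t (f a))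
  simp only [hcompl, sum_sub_distrib]
  rw [← sum_compl_add_sum s fun a => ∑ b, f a b, ← sum_compl_add_sum s fun a => ∑ b ∈ t, f a b]
  abel

theorem Finset.sum_le_card_filter_eq_one {α : Type*} (s : Finset α) (f : α → ℤ)
    (hf : ∀ x ∈ s, f x ≤ 1) : ∑ x ∈ s, f x ≤ #{x ∈ s | f x = 1} := by
  rw [natCast_card_filter]
  refine sum_le_sum fun x hx => ?_
  split_ifs with h
  · exact h.le
  · have := hf x hx
    omega

/-- Inclusion–exclusion: the whole matrix, the kept rows, the kept columns and the kept block
sum to `|ι|`, `|κ|`, `|κ|` and `|κ|`. -/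
theorem Matrix.sum_compl_image_sum_compl_image {ι κ R : Type*} [Fintype ι] [DecidableEq ι]
    [Fintype κ] [AddCommGroupWithOne R] (A : Matrix ι ι R) {fR fC : κ → ι}
    (hfR : Injective fR) (hfC : Injective fC) (hrow : ∀ i, ∑ j, A i j = 1)
    (hcol : ∀ j, ∑ i, A i j = 1) (hsub : ∀ j, ∑ i, A (fR i) (fC j) = 1) :
    ∑ r ∈ (univ.image fR)ᶜ, ∑ c ∈ (univ.image fC)ᶜ, A r c =
      (Fintype.card ι : R) - Fintype.card κ := by
  have htotal : ∑ r, ∑ c, A r c = Fintype.card ι := by simp [hrow]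
  have hrows : ∑ r ∈ univ.image fR, ∑ c, A r c = Fintype.card κ := by
    simp [sum_image hfR.injOn, hrow]
  have hcols : ∑ r, ∑ c ∈ univ.image fC, A r c = Fintype.card κ := by
    rw [sum_comm (f := fun r c => A r c)]
    simp [sum_image hfC.injOn, hcol]
  have hblock : ∑ r ∈ univ.image fR, ∑ c ∈ univ.image fC, A r c = Fintype.card κ := by
    rw [sum_comm (f := fun r c => A r c)]
    simp [sum_image hfR.injOn, sum_image hfC.injOn, hsub]
  rw [sum_compl_sum_compl fun r c => A r c, htotal, hrows, hcols, hblock]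
  abel

/-- Suppose an `(m+k) × (m+k)` ASM `A` contains an `m × m` ASM as the submatrix
on the kept rows `fR` and kept columns `fC`, with `W` and `C` the sets of
deleted rows and columns (each of size `k`).  Then `∑_{r ∈ W, c ∈ C} A_{r,c} = k`;
in particular at least `k` pairs `(r,c) ∈ W × C` have `A_{r,c} = 1`. -/
theorem asm_submatrix_corner_sum {m k : ℕ}
    (A : Matrix (Fin (m + k)) (Fin (m + k)) ℤ)
    (fR fC : Fin m → Fin (m + k)) (hfR : StrictMono fR) (hfC : StrictMono fC)
    (hA : IsASM A)
    (hA' : IsASM (Matrix.of fun i j : Fin m => A (fR i) (fC j))) :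
    (∑ r ∈ Finset.univ \ Finset.image fR Finset.univ,
      ∑ c ∈ Finset.univ \ Finset.image fC Finset.univ, A r c) = (k : ℤ) ∧
    k ≤ (((Finset.univ \ Finset.image fR Finset.univ) ×ˢ
          (Finset.univ \ Finset.image fC Finset.univ)).filter
            fun p => A p.1 p.2 = 1).card := by
  obtain ⟨hentries, hrow, hcol, -, -⟩ := hA
  obtain ⟨-, -, hcol', -, -⟩ := hA'
  have hsum : ∑ r ∈ univ \ univ.image fR, ∑ c ∈ univ \ univ.image fC, A r c = k := by
    rw [← compl_eq_univ_sdiff, ← compl_eq_univ_sdiff,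
      A.sum_compl_image_sum_compl_image hfR.injective hfC.injective hrow hcol hcol']
    simp
  refine ⟨hsum, ?_⟩
  have hle := sum_le_card_filter_eq_one ((univ \ univ.image fR) ×ˢ (univ \ univ.image fC))
    (fun p => A p.1 p.2) fun p _ => by rcases hentries p.1 p.2 with h | h | h <;> omega
  rw [sum_product, hsum] at hle
  exact_mod_cast hle
end
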